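/- Let (a,b,c) be a UM triple of positive integers with gcd(a,b,c) = 1, p = gcd(a,b), q = gcd(a,c), r = gcd(b,c), a = dpq, b = epr, c = fqr, and suppose f ∈ S(d,e). Then a positive integer is a gap of S(a,b,c) if and only if it has the form (de + f)pqr - ia - jb - kc for some positive integers i, j, k; in particular, the beta set of the unique maximal (a,b,c)-core is exactly this set. -/

import Mathlib

/-!
The hook lengths in row `i` of a partition are exactly the numbers `β_i - m` with `m < β_i` and
`m ∉ β(λ)`. So `λ` is an `A`-core iff its beta set is closed under subtracting elements of `A`.
Such a set cannot meet `S(A)` (walk down to `0 ∉ β(λ)`), so it lies in the gap set; conversely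
the gap set is closed under subtraction, hence is the beta set of a core, which the maximal core
contains. Counting rows, the beta set of the maximal core is the whole gap set.

For the gaps, put `N = (de + f)pqr = dq·b + p·c`. As `gcd(p, c) = gcd(dq, er) = 1`, every integer
is `xa + yb + zc` with `0 ≤ y < dq` and `0 ≤ z < p`, and it is a gap exactly when `x < 0`, i.e.
when it equals `N - ia - jb - kc` with `i, j, k ≥ 1`. Such numbers are gaps because `N` is not
`ia + jb + kc` with `i, j, k ≥ 1`: divisibility forces `r ∣ i`, `q ∣ j`, `p ∣ k`, reducing this to
`de + f = i'd + j'e + k'f`, and with `f ∈ S(d, e)` to writing `de` as a combination of the coprime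
`d` and `e` with positive coefficients, which is impossible.
-/

/-- A partition: a nonincreasing list of positive integers. -/
structure ListPartition where
  parts : List ℕ
  sorted : parts.Pairwise (· ≥ ·)
  pos : ∀ x ∈ parts, 0 < x

namespace ListPartition

/-- The i-th part (0-indexed), or 0 past the end. -/
def part (lam : ListPartition) (i : ℕ) : ℕ := lam.parts.getD i 0

/-- Hook length of the cell in (0-indexed) row i and (1-indexed) column j:
    λ_i - j + #{rows k > i with λ_k ≥ j} + 1. -/
def hook (lam : ListPartition) (i j : ℕ) : ℕ :=
  lam.part i - j + ((List.range lam.parts.length).countP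
    fun k => decide (i < k ∧ j ≤ lam.part k)) + 1

/-- λ is an A-core: no hook length lies in A. -/
def IsCore (A : Finset ℕ) (lam : ListPartition) : Prop :=
  ∀ i j : ℕ, i < lam.parts.length → 1 ≤ j → j ≤ lam.part i → lam.hook i j ∉ A

/-- The beta set of λ: first-column hook lengths {λ_i + r - i} (1-indexed form). -/
def beta (lam : ListPartition) : Finset ℕ :=
  (Finset.range lam.parts.length).image fun i => lam.part i + (lam.parts.length - 1 - i)

/-- μ is a subpartition of λ. -/
def Sub (mu lam : ListPartition) : Prop :=
  mu.parts.length ≤ lam.parts.length ∧ ∀ i : ℕ, mu.part i ≤ lam.part i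

end ListPartition

/-- Membership in the numerical semigroup generated by the finite set A. -/
def SemiS (A : Finset ℕ) (n : ℕ) : Prop := ∃ f : ℕ → ℕ, n = ∑ a ∈ A, f a * a

/-- n is a gap of S(A). -/
def GapS (A : Finset ℕ) (n : ℕ) : Prop := 0 < n ∧ ¬ SemiS A n

/-- A is UM: some A-core contains every A-core as a subpartition. -/
def UM (A : Finset ℕ) : Prop :=
  ∃ κ : ListPartition, ListPartition.IsCore A κ ∧ ∀ μ : ListPartition, ListPartition.IsCore A μ → μ.Sub κ

theorem Nat.exists_forall_lt_iff_lt_of_antitone {P : ℕ → Prop} (hP : Antitone P) (r : ℕ) :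
    ∃ c ≤ r, ∀ k < r, P k ↔ k < c := by
  induction r with
  | zero => exact ⟨0, le_rfl, by simp⟩
  | succ r ih =>
    obtain ⟨c, hcr, hc⟩ := ih
    by_cases hr : P r
    · exact ⟨r + 1, le_rfl, fun k hk => iff_of_true (hP (by omega) hr) hk⟩
    · refine ⟨c, by omega, fun k hk => ?_⟩
      rcases Nat.lt_succ_iff_lt_or_eq.mp hk with hk | rfl
      · exact hc k hk
      · exact iff_of_false hr (by omega)

namespace ListPartition

section

variable (lam : ListPartition)

theorem part_eq_zero {i : ℕ} (h : lam.parts.length ≤ i) : lam.part i = 0 :=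
  List.getD_eq_default _ _ h

theorem part_pos {i : ℕ} (h : i < lam.parts.length) : 0 < lam.part i := by
  apply lam.pos
  rw [part, List.getD_eq_getElem _ _ h]
  exact List.getElem_mem _

theorem part_antitone : Antitone lam.part := by
  intro i j hij
  by_cases hj : j < lam.parts.length
  · rcases hij.lt_or_eq with hij | rfl
    · rw [part, part, List.getD_eq_getElem _ _ hj, List.getD_eq_getElem _ _ (hij.trans hj)]
      exact List.pairwise_iff_getElem.mp lam.sorted i j (hij.trans hj) hj hij
    · exact le_rfl
  · simp [lam.part_eq_zero (not_lt.mp hj)]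

def betaEntry (i : ℕ) : ℕ := lam.part i + (lam.parts.length - 1 - i)

theorem mem_beta {n : ℕ} : n ∈ lam.beta ↔ ∃ i < lam.parts.length, lam.betaEntry i = n := by
  simp [beta, betaEntry]

theorem betaEntry_antitone : Antitone lam.betaEntry := fun i j hij => by
  have := lam.part_antitone hij
  unfold betaEntry
  omega

theorem betaEntry_strictAntiOn : StrictAntiOn lam.betaEntry (Set.Iio lam.parts.length) :=
  fun i _ j hj hij => by
    have := lam.part_antitone hij.le
    simp only [Set.mem_Iio] at hj
    unfold betaEntry
    omega

theorem card_beta : lam.beta.card = lam.parts.length := by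
  have hinj : Set.InjOn lam.betaEntry (Finset.range lam.parts.length) := by
    rw [Finset.coe_range]
    exact lam.betaEntry_strictAntiOn.injOn
  exact (Finset.card_image_of_injOn hinj).trans (Finset.card_range _)

theorem zero_notMem_beta : 0 ∉ lam.beta := by
  rw [mem_beta]
  rintro ⟨i, hi, h0⟩
  have := lam.part_pos hi
  unfold betaEntry at h0
  omega

theorem hook_eq {i j c : ℕ} (hcr : c ≤ lam.parts.length) (hic : i < c)
    (hc : ∀ k < lam.parts.length, j ≤ lam.part k ↔ k < c) :
    lam.hook i j = lam.part i - j + (c - 1 - i) + 1 := by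
  have hrows : (List.range lam.parts.length).countP (fun k => decide (i < k ∧ j ≤ lam.part k))
      = (Finset.Ioo i c).card := by
    rw [List.countP_eq_length_filter]
    change ((Finset.range lam.parts.length).filter fun k => i < k ∧ j ≤ lam.part k).card = _
    congr 1
    ext k
    simp only [Finset.mem_filter, Finset.mem_range, Finset.mem_Ioo]
    constructor
    · rintro ⟨hk, hik, hjk⟩
      exact ⟨hik, (hc k hk).mp hjk⟩
    · rintro ⟨hik, hkc⟩
      exact ⟨by omega, hik, (hc k (by omega)).mpr hkc⟩
  rw [hook, hrows, Nat.card_Ioo]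
  omega

theorem exists_notMem_beta_hook_add {i j : ℕ} (hi : i < lam.parts.length) (hj : 1 ≤ j)
    (hji : j ≤ lam.part i) : ∃ m ∉ lam.beta, lam.hook i j + m = lam.betaEntry i := by
  obtain ⟨c, hcr, hc⟩ := Nat.exists_forall_lt_iff_lt_of_antitone (P := fun k => j ≤ lam.part k)
    (fun _ _ hkl hl => hl.trans (lam.part_antitone hkl)) lam.parts.length
  have hic : i < c := (hc i hi).mp hji
  refine ⟨lam.parts.length - c + j - 1, ?_, by rw [lam.hook_eq hcr hic hc, betaEntry]; omega⟩
  rw [mem_beta]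
  rintro ⟨k, hk, hkm⟩
  have := hc k hk
  unfold betaEntry at hkm
  by_cases hkc : k < c <;> omega

theorem exists_hook_add_eq {i m : ℕ} (hi : i < lam.parts.length) (hm : m ∉ lam.beta)
    (hmi : m < lam.betaEntry i) :
    ∃ j, 1 ≤ j ∧ j ≤ lam.part i ∧ lam.hook i j + m = lam.betaEntry i := by
  set r := lam.parts.length
  obtain ⟨c, hcr, hc⟩ := Nat.exists_forall_lt_iff_lt_of_antitone (P := fun k => m < lam.betaEntry k)
    (fun _ _ hkl hl => hl.trans_le (lam.betaEntry_antitone hkl)) r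
  have hic : i < c := (hc i hi).mp hmi
  have hne : ∀ k < r, lam.betaEntry k ≠ m := fun k hk h => hm (lam.mem_beta.mpr ⟨k, hk, h⟩)
  have hbelow : c < r → lam.betaEntry c < m := fun hcr' =>
    (not_lt.mp fun h => lt_irrefl c ((hc c hcr').mp h)).lt_of_ne (hne c hcr')
  have habove : m < lam.betaEntry (c - 1) := (hc (c - 1) (by omega)).mpr (by omega)
  have hthr : ∀ k < r, m + c + 1 - r ≤ lam.part k ↔ k < c := by
    intro k hk
    constructor
    · intro hjk
      by_contra hkc
      have := hbelow (by omega)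
      have := lam.part_antitone (not_lt.mp hkc)
      unfold betaEntry at *
      omega
    · intro hkc
      have := lam.part_antitone (show c - 1 ≥ k by omega)
      unfold betaEntry at habove
      omega
  have hj : 1 ≤ m + c + 1 - r := by
    rcases hcr.lt_or_eq with hcr' | rfl
    · have := hbelow hcr'
      unfold betaEntry at this
      omega
    · omega
  have hji := (hthr i hi).mpr hic
  refine ⟨m + c + 1 - r, hj, hji, ?_⟩
  rw [lam.hook_eq hcr hic hthr, betaEntry]
  omega

end

theorem isCore_iff_sub_mem_beta {A : Finset ℕ} {lam : ListPartition} :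
    IsCore A lam ↔ ∀ n ∈ lam.beta, ∀ s ∈ A, s ≤ n → n - s ∈ lam.beta := by
  constructor
  · intro hcore n hn s hs hsn
    by_contra hns
    obtain ⟨i, hi, rfl⟩ := lam.mem_beta.mp hn
    have hs0 : s ≠ 0 := by rintro rfl; exact hns (by simpa using hn)
    obtain ⟨j, hj, hji, hhook⟩ := lam.exists_hook_add_eq hi hns (by omega)
    exact hcore i j hi hj hji (by rwa [show lam.hook i j = s by omega])
  · intro hclosed i j hi hj hji hmem
    obtain ⟨m, hm, hhook⟩ := lam.exists_notMem_beta_hook_add hi hj hji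
    have := hclosed _ (lam.mem_beta.mpr ⟨i, hi, rfl⟩) _ hmem (by omega)
    exact hm (by rwa [show lam.betaEntry i - lam.hook i j = m by omega] at this)

def cons (a : ℕ) (lam : ListPartition) (ha : 0 < a) (hla : lam.part 0 ≤ a) : ListPartition where
  parts := a :: lam.parts
  sorted := by
    refine List.pairwise_cons.mpr ⟨fun x hx => ?_, lam.sorted⟩
    obtain ⟨i, hi, rfl⟩ := List.getElem_of_mem hx
    have := lam.part_antitone (Nat.zero_le i)
    rw [part, List.getD_eq_getElem _ _ hi] at this
    omega
  pos := by
    rintro x (_ | ⟨_, hx⟩)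
    exacts [ha, lam.pos x hx]

theorem beta_cons (a : ℕ) (lam : ListPartition) (ha : 0 < a) (hla : lam.part 0 ≤ a) :
    (lam.cons a ha hla).beta = insert (a + lam.parts.length) lam.beta := by
  ext n
  simp only [Finset.mem_insert, mem_beta, betaEntry, part, cons, List.length_cons,
    Nat.exists_lt_succ_left, List.getD_cons_zero, List.getD_cons_succ]
  refine or_congr (by omega) (exists_congr fun i => and_congr_right fun hi => ?_)
  rw [show lam.parts.length + 1 - 1 - (i + 1) = lam.parts.length - 1 - i by omega]

theorem exists_beta_eq (X : Finset ℕ) (hX : 0 ∉ X) : ∃ lam : ListPartition, lam.beta = X := by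
  induction X using Finset.induction_on_max with
  | empty => exact ⟨⟨[], List.Pairwise.nil, by simp⟩, rfl⟩
  | insert x s hlt ih =>
    obtain ⟨lam, rfl⟩ := ih fun h => hX (Finset.mem_insert_of_mem h)
    have hx : 0 < x := Nat.pos_of_ne_zero fun h => hX (h ▸ Finset.mem_insert_self x _)
    have hcard : lam.parts.length < x := by
      have : lam.beta ⊆ Finset.Ioo 0 x := fun y hy =>
        Finset.mem_Ioo.mpr ⟨Nat.pos_of_ne_zero fun h => lam.zero_notMem_beta (h ▸ hy), hlt y hy⟩
      have := Finset.card_le_card this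
      rw [card_beta, Nat.card_Ioo] at this
      omega
    have hpart : lam.part 0 ≤ x - lam.parts.length := by
      rcases Nat.eq_zero_or_pos lam.parts.length with h | h
      · simp [lam.part_eq_zero h.le]
      · have := hlt _ (lam.mem_beta.mpr ⟨0, h, rfl⟩)
        unfold betaEntry at this
        omega
    refine ⟨lam.cons (x - lam.parts.length) (by omega) hpart, ?_⟩
    rw [beta_cons, Nat.sub_add_cancel hcard.le]

end ListPartition

theorem semiS_iff_mem_closure {A : Finset ℕ} {n : ℕ} :
    SemiS A n ↔ n ∈ AddSubmonoid.closure (A : Set ℕ) := by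
  constructor
  · rintro ⟨f, rfl⟩
    exact AddSubmonoid.sum_mem _ fun a ha =>
      AddSubmonoid.nsmul_mem _ (AddSubmonoid.subset_closure ha) _
  · rw [AddSubmonoid.mem_closure_finset]
    rintro ⟨f, -, rfl⟩
    exact ⟨f, by simp only [smul_eq_mul]⟩

theorem semiS_triple_iff {a b c n : ℕ} :
    SemiS {a, b, c} n ↔ ∃ i j k : ℕ, n = i * a + j * b + k * c := by
  rw [semiS_iff_mem_closure, Finset.coe_insert, Finset.coe_pair, ← Set.singleton_union,
    AddSubmonoid.closure_union, AddSubmonoid.mem_sup]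
  simp only [AddSubmonoid.mem_closure_singleton, AddSubmonoid.mem_closure_pair, smul_eq_mul]
  constructor
  · rintro ⟨_, ⟨i, rfl⟩, _, ⟨j, k, rfl⟩, rfl⟩
    exact ⟨i, j, k, by ring⟩
  · rintro ⟨i, j, k, rfl⟩
    exact ⟨_, ⟨i, rfl⟩, _, ⟨j, k, rfl⟩, by ring⟩

theorem GapS.sub {A : Finset ℕ} {g s : ℕ} (hg : GapS A g) (hs : s ∈ A) (hsg : s ≤ g) :
    GapS A (g - s) := by
  have hS : ∀ m, SemiS A m → SemiS A (m + s) := fun m hm => by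
    rw [semiS_iff_mem_closure] at hm ⊢
    exact add_mem hm (AddSubmonoid.subset_closure hs)
  refine ⟨Nat.pos_of_ne_zero fun h => hg.2 ?_, fun h => hg.2 ?_⟩
  · simpa [show g = s by omega] using hS 0 ⟨0, by simp⟩
  · simpa [Nat.sub_add_cancel hsg] using hS _ h

theorem ListPartition.not_semiS_of_mem_beta {A : Finset ℕ} {lam : ListPartition}
    (hcore : lam.IsCore A) {n : ℕ} (hn : n ∈ lam.beta) : ¬ SemiS A n := by
  rw [semiS_iff_mem_closure]
  intro hS
  suffices ∀ y, n + y ∈ lam.beta → y ∈ lam.beta from lam.zero_notMem_beta (this 0 hn)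
  clear hn
  induction hS using AddSubmonoid.closure_induction with
  | mem s hs =>
    intro y hy
    simpa using isCore_iff_sub_mem_beta.mp hcore _ hy s hs (by omega)
  | zero => simp
  | add m m' _ _ ihm ihm' =>
    intro y hy
    exact ihm' y (ihm _ (by rwa [add_assoc] at hy))

theorem ListPartition.mem_beta_iff_gapS_of_forall_sub {A : Finset ℕ} {κ : ListPartition}
    (hκ : κ.IsCore A) (hmax : ∀ μ : ListPartition, μ.IsCore A → μ.Sub κ)
    (hfin : {n | GapS A n}.Finite) (n : ℕ) : n ∈ κ.beta ↔ GapS A n := by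
  set G := hfin.toFinset
  have hsub : κ.beta ⊆ G := fun m hm => hfin.mem_toFinset.mpr
    ⟨Nat.pos_of_ne_zero fun h => κ.zero_notMem_beta (h ▸ hm), κ.not_semiS_of_mem_beta hκ hm⟩
  obtain ⟨μ, hμ⟩ := exists_beta_eq G fun h => (hfin.mem_toFinset.mp h).1.false
  have hμcore : μ.IsCore A := isCore_iff_sub_mem_beta.mpr fun m hm s hs hsm => by
    rw [hμ, hfin.mem_toFinset] at hm ⊢
    exact hm.sub hs hsm
  have hcard : G.card ≤ κ.beta.card := by
    rw [← hμ, card_beta, card_beta]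
    exact (hmax μ hμcore).1
  rw [Finset.eq_of_subset_of_card_le hsub hcard, hfin.mem_toFinset]
  rfl

theorem exists_eq_mul_add_mul_of_isCoprime {u w : ℤ} (hu : 0 < u) (h : IsCoprime u w) (n : ℤ) :
    ∃ x y, 0 ≤ y ∧ y < u ∧ n = x * u + y * w := by
  obtain ⟨s, t, hst⟩ := h
  refine ⟨n * s + n * t / u * w, n * t % u, Int.emod_nonneg _ hu.ne', Int.emod_lt_of_pos _ hu, ?_⟩
  linear_combination (-n) * hst - w * Int.emod_add_mul_ediv (n * t) u

theorem Nat.Coprime.mul_ne_mul_add_mul {d e A B : ℕ} (hde : d.Coprime e) (hA : 0 < A)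
    (hB : 0 < B) : d * e ≠ A * d + B * e := by
  intro h
  have hdB : d ∣ B := hde.dvd_of_dvd_mul_right <|
    (Nat.dvd_add_right (_root_.dvd_mul_left d A)).mp (h ▸ _root_.dvd_mul_right d e)
  obtain ⟨B', rfl⟩ := hdB
  have hd : 0 < d := Nat.pos_of_mul_pos_right hB
  have hB' : 0 < B' := Nat.pos_of_mul_pos_left hB
  have := Nat.mul_le_mul_right e (Nat.le_mul_of_pos_right d hB')
  linarith [Nat.mul_pos hA hd]

theorem gapS_iff_of_decomposition {a b c u v : ℕ} {N : ℤ} (hN : N = u * b + v * c)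
    (hdecomp : ∀ n : ℤ, ∃ x y z : ℤ, 0 ≤ y ∧ y < u ∧ 0 ≤ z ∧ z < v ∧ n = x * a + y * b + z * c)
    (hN_notMem : ¬ ∃ i j k : ℕ, 1 ≤ i ∧ 1 ≤ j ∧ 1 ≤ k ∧ N = i * a + j * b + k * c) (n : ℕ) :
    GapS {a, b, c} n ↔
      ∃ i j k : ℕ, 1 ≤ i ∧ 1 ≤ j ∧ 1 ≤ k ∧ (n : ℤ) = N - i * a - j * b - k * c := by
  constructor
  · rintro ⟨-, hnS⟩
    obtain ⟨x, y, z, hy0, hyu, hz0, hzv, hn⟩ := hdecomp n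
    have hx : x < 0 := by
      by_contra! hx
      lift x to ℕ using hx
      lift y to ℕ using hy0
      lift z to ℕ using hz0
      exact hnS (semiS_triple_iff.mpr ⟨x, y, z, by exact_mod_cast hn⟩)
    refine ⟨(-x).toNat, (u - y).toNat, (v - z).toNat, by omega, by omega, by omega, ?_⟩
    rw [Int.toNat_of_nonneg (by omega), Int.toNat_of_nonneg (by omega),
      Int.toNat_of_nonneg (by omega), hN]
    linear_combination hn
  · rintro ⟨i, j, k, hi, hj, hk, hn⟩
    have hnS : ¬ SemiS {a, b, c} n := by
      rw [semiS_triple_iff]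
      rintro ⟨x, y, z, rfl⟩
      exact hN_notMem ⟨x + i, y + j, z + k, by omega, by omega, by omega, by
        push_cast at hn ⊢; linear_combination -hn⟩
    exact ⟨Nat.pos_of_ne_zero fun h => hnS (h ▸ semiS_triple_iff.mpr ⟨0, 0, 0, by simp⟩), hnS⟩

theorem mul_ne_pos_combination {d e f p q r X Y Z : ℕ} (hp : 0 < p) (hq : 0 < q) (hr : 0 < r)
    (hde : d.Coprime e) (hra : r.Coprime (d * p * q)) (hqb : q.Coprime (e * p * r))
    (hpc : p.Coprime (f * q * r)) (hf : ∃ i j, f = i * d + j * e)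
    (hX : 1 ≤ X) (hY : 1 ≤ Y) (hZ : 1 ≤ Z) :
    (d * e + f) * (p * q * r) ≠ X * (d * p * q) + Y * (e * p * r) + Z * (f * q * r) := by
  intro h
  have dvd_coeff : ∀ {k g C m : ℕ}, k.Coprime g → k ∣ (d * e + f) * (p * q * r) → k ∣ m →
      (d * e + f) * (p * q * r) = C * g + m → k ∣ C := fun hkg hN hm hsum =>
    hkg.dvd_of_dvd_mul_right ((Nat.dvd_add_left hm).mp (hsum ▸ hN))
  obtain ⟨X, rfl⟩ := dvd_coeff hra (C := X) (m := Y * (e * p * r) + Z * (f * q * r))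
    (Dvd.intro ((d * e + f) * (p * q)) (by ring)) (Dvd.intro (Y * e * p + Z * f * q) (by ring))
    (by rw [h]; ring)
  obtain ⟨Y, rfl⟩ := dvd_coeff hqb (C := Y) (m := r * X * (d * p * q) + Z * (f * q * r))
    (Dvd.intro ((d * e + f) * (p * r)) (by ring)) (Dvd.intro (r * X * d * p + Z * f * r) (by ring))
    (by rw [h]; ring)
  obtain ⟨Z, rfl⟩ := dvd_coeff hpc (C := Z) (m := r * X * (d * p * q) + q * Y * (e * p * r))
    (Dvd.intro ((d * e + f) * (q * r)) (by ring))
    (Dvd.intro (r * X * d * q + q * Y * e * r) (by ring)) (by rw [h]; ring)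
  have hcancel : d * e + f = X * d + Y * e + Z * f :=
    Nat.eq_of_mul_eq_mul_right (by positivity : 0 < p * q * r) (by rw [h]; ring)
  obtain ⟨i, j, rfl⟩ := hf
  obtain ⟨Z, rfl⟩ : ∃ Z', Z = Z' + 1 := ⟨Z - 1, by have := Nat.pos_of_mul_pos_left hZ; omega⟩
  exact hde.mul_ne_mul_add_mul (A := X + Z * i) (B := Y + Z * j)
    (by have := Nat.pos_of_mul_pos_left hX; omega) (by have := Nat.pos_of_mul_pos_left hY; omega)
    (by linarith [hcancel])

theorem gapS_iff_of_gcd {a b c p q r d e f : ℕ} (ha : 0 < a) (hb : 0 < b) (hd : 0 < d)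
    (habc : Nat.gcd (Nat.gcd a b) c = 1)
    (hp : p = Nat.gcd a b) (hq : q = Nat.gcd a c) (hr : r = Nat.gcd b c)
    (hda : a = d * p * q) (heb : b = e * p * r) (hfc : c = f * q * r)
    (hfS : ∃ i j : ℕ, f = i * d + j * e) (n : ℕ) :
    GapS {a, b, c} n ↔ ∃ i j k : ℕ, 1 ≤ i ∧ 1 ≤ j ∧ 1 ≤ k ∧
      (n : ℤ) = ((d : ℤ) * e + f) * (p * q * r) - i * a - j * b - k * c := by
  have hp0 : 0 < p := hp ▸ Nat.gcd_pos_of_pos_left b ha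
  have hq0 : 0 < q := hq ▸ Nat.gcd_pos_of_pos_left c ha
  have hr0 : 0 < r := hr ▸ Nat.gcd_pos_of_pos_left c hb
  have hpc : p.Coprime c := hp ▸ habc
  have hqb : q.Coprime b := by rw [hq, Nat.Coprime, Nat.gcd_right_comm]; exact habc
  have hra : r.Coprime a := by rw [hr, Nat.Coprime, Nat.gcd_comm, ← Nat.gcd_assoc]; exact habc
  subst hda heb hfc
  have hdqer : (d * q).Coprime (e * r) := by
    rw [show d * p * q = p * (d * q) by ring, show e * p * r = p * (e * r) by ring,
      Nat.gcd_mul_left] at hp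
    exact (Nat.mul_eq_left hp0.ne').mp hp.symm
  have hde : d.Coprime e := hdqer.coprime_mul_right.coprime_mul_right_right
  refine gapS_iff_of_decomposition (u := d * q) (v := p) (by push_cast; ring) (fun n => ?_) ?_ n
  · obtain ⟨m, z, hz0, hzp, rfl⟩ := exists_eq_mul_add_mul_of_isCoprime (by exact_mod_cast hp0)
      (Nat.isCoprime_iff_coprime.mpr hpc) n
    obtain ⟨x, y, hy0, hyu, rfl⟩ := exists_eq_mul_add_mul_of_isCoprime
      (by exact_mod_cast Nat.mul_pos hd hq0) (Nat.isCoprime_iff_coprime.mpr hdqer) m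
    exact ⟨x, y, z, hy0, hyu, hz0, hzp, by push_cast; ring⟩
  · rintro ⟨i, j, k, hi, hj, hk, h⟩
    exact mul_ne_pos_combination hp0 hq0 hr0 hde hra hqb hpc hfS hi hj hk (by exact_mod_cast h)

theorem maximal_core_description_general (a b c p q r d e f : ℕ)
    (ha : 0 < a) (hb : 0 < b)
    (hd : 0 < d)
    (habc : Nat.gcd (Nat.gcd a b) c = 1)
    (hp : p = Nat.gcd a b) (hq : q = Nat.gcd a c) (hr : r = Nat.gcd b c)
    (hda : a = d * p * q) (heb : b = e * p * r) (hfc : c = f * q * r)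
    (hfS : ∃ i j : ℕ, f = i * d + j * e) :
    (∀ n : ℕ, GapS {a, b, c} n ↔
      ∃ i j k : ℕ, 1 ≤ i ∧ 1 ≤ j ∧ 1 ≤ k ∧
        (n : ℤ) = ((d : ℤ) * e + f) * (p * q * r) - i * a - j * b - k * c) ∧
    ∀ κ : ListPartition, ListPartition.IsCore {a, b, c} κ →
      (∀ μ : ListPartition, ListPartition.IsCore {a, b, c} μ → μ.Sub κ) →
      ∀ n : ℕ, n ∈ κ.beta ↔
        ∃ i j k : ℕ, 1 ≤ i ∧ 1 ≤ j ∧ 1 ≤ k ∧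
          (n : ℤ) = ((d : ℤ) * e + f) * (p * q * r) - i * a - j * b - k * c := by
  have hgap := gapS_iff_of_gcd ha hb hd habc hp hq hr hda heb hfc hfS
  have hfin : {n | GapS {a, b, c} n}.Finite := by
    refine (Set.finite_Iic ((d * e + f) * (p * q * r))).subset fun m hm => ?_
    obtain ⟨i, j, k, -, -, -, hm⟩ := (hgap m).mp hm
    have : (m : ℤ) ≤ ((d * e + f) * (p * q * r) : ℕ) := by
      push_cast
      linarith [show (0 : ℤ) ≤ i * a + j * b + k * c by positivity]
    exact_mod_cast this
  refine ⟨hgap, fun κ hκ hmax n => ?_⟩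
  rw [κ.mem_beta_iff_gapS_of_forall_sub hκ hmax hfin, hgap]

theorem maximal_core_description (a b c p q r d e f : ℕ)
    (ha : 0 < a) (hb : 0 < b) (hc : 0 < c)
    (hd : 0 < d) (he : 0 < e) (hf : 0 < f)
    (habc : Nat.gcd (Nat.gcd a b) c = 1)
    (hp : p = Nat.gcd a b) (hq : q = Nat.gcd a c) (hr : r = Nat.gcd b c)
    (hda : a = d * p * q) (heb : b = e * p * r) (hfc : c = f * q * r)
    (hfS : ∃ i j : ℕ, f = i * d + j * e)
    (hUM : UM {a, b, c}) :
    (∀ n : ℕ, GapS {a, b, c} n ↔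
      ∃ i j k : ℕ, 1 ≤ i ∧ 1 ≤ j ∧ 1 ≤ k ∧
        (n : ℤ) = ((d : ℤ) * e + f) * (p * q * r) - i * a - j * b - k * c) ∧
    ∀ κ : ListPartition, ListPartition.IsCore {a, b, c} κ →
      (∀ μ : ListPartition, ListPartition.IsCore {a, b, c} μ → μ.Sub κ) →
      ∀ n : ℕ, n ∈ κ.beta ↔
        ∃ i j k : ℕ, 1 ≤ i ∧ 1 ≤ j ∧ 1 ≤ k ∧
          (n : ℤ) = ((d : ℤ) * e + f) * (p * q * r) - i * a - j * b - k * c :=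
  maximal_core_description_general a b c p q r d e f ha hb hd habc hp hq hr hda heb hfc hfS
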